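/- arXiv:1002.4350 — 3 statements merged into one kernel-verified Lean document; each statement's English description precedes it below -/
import Mathlib

section
/- Fix an integer g ≥ 2 and an integer d. Then gcd(d−g+1, 2g−2) = 1 if and only if every stable weighted graph of genus g is d-general. -/
open Finset

noncomputable section
open scoped Classical

variable {V : Type} [Fintype V] [DecidableEq V]

/-- The simple graph underlying a multigraph with multiplicity function `k`:
`u` and `v` are adjacent iff `u ≠ v` and some edge joins them. -/
def graphOf (k : V → V → ℕ) : SimpleGraph V where
  Adj u v := u ≠ v ∧ (0 < k u v ∨ 0 < k v u)
  symm := ⟨fun u v h => ⟨h.1.symm, h.2.symm⟩⟩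
  loopless := ⟨fun v h => h.1 rfl⟩

/-- The number of edges of a multigraph: loops plus half the ordered count. -/
def numEdges (k : V → V → ℕ) : ℕ :=
  (∑ v, k v v) + (∑ u, ∑ v ∈ Finset.univ.erase u, k u v) / 2

/-- The genus of a weighted graph: `∑ w(v) + b₁`, with `b₁ = #E - #V + 1`. -/
def genus (k : V → V → ℕ) (w : V → ℕ) : ℤ :=
  (∑ v, (w v : ℤ)) + ((numEdges k : ℤ) - (Fintype.card V : ℤ) + 1)

/-- Stability: connected, and each weight-zero vertex has valency at least 3. -/
def IsStable (k : V → V → ℕ) (w : V → ℕ) : Prop :=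
  (graphOf k).Connected ∧
    ∀ v, w v = 0 → 3 ≤ 2 * k v v + ∑ u ∈ Finset.univ.erase v, k u v

/-- `δ_A`: the number of edges joining `A` to its complement. -/
def deltaA (k : V → V → ℕ) (A : Finset V) : ℤ :=
  ∑ u ∈ A, ∑ v ∈ Aᶜ, (k u v : ℤ)

/-- `w_A = Σ_{v∈A} (2w(v) − 2 + 2k(v,v) + Σ_{u≠v} k(u,v))`. -/
def wA (k : V → V → ℕ) (w : V → ℕ) (A : Finset V) : ℤ :=
  ∑ v ∈ A, (2 * (w v : ℤ) - 2 + 2 * (k v v : ℤ) + ∑ u ∈ Finset.univ.erase v, (k u v : ℤ))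

/-- `d_A`: the total degree of a multidegree on the subset `A`. -/
def degA (d : V → ℤ) (A : Finset V) : ℤ := ∑ v ∈ A, d v

/-- `m_A(d) = d·w_A/(2g−2) − δ_A/2 ∈ ℚ`. -/
def mA (k : V → V → ℕ) (w : V → ℕ) (D : ℤ) (A : Finset V) : ℚ :=
  (D : ℚ) * (wA k w A : ℚ) / ((2 * genus k w - 2 : ℤ) : ℚ) - (deltaA k A : ℚ) / 2

/-- A balanced multidegree of total degree `D`. -/
def IsBalanced (k : V → V → ℕ) (w : V → ℕ) (D : ℤ) (d : V → ℤ) : Prop :=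
  degA d Finset.univ = D ∧ ∀ A : Finset V, mA k w D A ≤ (degA d A : ℚ)

/-- A strictly balanced multidegree of total degree `D`. -/
def IsStrictlyBalanced (k : V → V → ℕ) (w : V → ℕ) (D : ℤ) (d : V → ℤ) : Prop :=
  IsBalanced k w D d ∧
    ∀ A : Finset V, A ≠ ∅ → A ≠ Finset.univ → mA k w D A < (degA d A : ℚ)

/-- `(Γ,w)` is `d`-general if every balanced multidegree of total degree `d`
is strictly balanced. -/
def IsDGeneral (k : V → V → ℕ) (w : V → ℕ) (D : ℤ) : Prop :=
  ∀ d : V → ℤ, IsBalanced k w D d → IsStrictlyBalanced k w D d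

/-- The generator `c_v` of the lattice `Λ`. -/
def cvec (k : V → V → ℕ) (v : V) : V → ℤ := fun u =>
  if u = v then -(∑ x ∈ Finset.univ.erase v, (k x v : ℤ)) else (k u v : ℤ)

/-- The lattice `Λ ⊆ ℤ^V` generated by the `c_v`. -/
def Lambda (k : V → V → ℕ) : AddSubgroup (V → ℤ) :=
  AddSubgroup.closure (Set.range (cvec k))

/-- The total-degree homomorphism `ℤ^V → ℤ`. -/
def sumHom (V : Type) [Fintype V] : (V → ℤ) →+ ℤ :=
  { toFun := fun d => ∑ v, d v
    map_zero' := by simp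
    map_add' := fun a b => by simp [Finset.sum_add_distrib] }

/-- `Z = {d ∈ ℤ^V : Σ_v d(v) = 0}`. -/
def Zsub (V : Type) [Fintype V] : AddSubgroup (V → ℤ) := (sumHom V).ker

/-- Remove the edge(s) joining `a` and `b` from the multigraph. -/
def removeEdge (k : V → V → ℕ) (a b : V) : V → V → ℕ := fun u v =>
  if (u = a ∧ v = b) ∨ (u = b ∧ v = a) then 0 else k u v

/-- `a`–`b` is a bridge: a single non-loop edge whose removal disconnects the graph. -/
def IsBridge (k : V → V → ℕ) (a b : V) : Prop :=
  a ≠ b ∧ k a b = 1 ∧ ¬ (graphOf (removeEdge k a b)).Connected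

/-- `A` induces a connected sub-multigraph. -/
def IsConnectedSubset (k : V → V → ℕ) (A : Finset V) : Prop :=
  ((graphOf k).induce (A : Set V)).Connected

/-- The equivalence relation `≈` on `V` generated by bridges. -/
def contractSetoid (k : V → V → ℕ) : Setoid V :=
  ⟨Relation.EqvGen (fun u v => IsBridge k u v), Relation.EqvGen.is_equivalence _⟩

/-- The vertex set `V² = V/≈` of the contracted graph `Γ²`. -/
def V2 (k : V → V → ℕ) : Type := Quotient (contractSetoid k)

instance (k : V → V → ℕ) : Finite (V2 k) := Quotient.finite _

instance (k : V → V → ℕ) : Fintype (V2 k) := Fintype.ofFinite _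

/-- The fiber of the quotient map `φ : V → V²` over a class `c`. -/
def fiber (k : V → V → ℕ) (c : V2 k) : Finset V :=
  Finset.univ.filter (fun v => Quotient.mk (contractSetoid k) v = c)

/-- The multiplicity function `k²` of the contracted graph `Γ²`. -/
def k2 (k : V → V → ℕ) : V2 k → V2 k → ℕ := fun c c' =>
  if c = c' then
    (∑ v ∈ fiber k c, k v v) +
      (∑ u ∈ fiber k c, ∑ v ∈ (fiber k c).erase u,
        if IsBridge k u v then 0 else k u v) / 2
  else ∑ u ∈ fiber k c, ∑ v ∈ fiber k c', k u v

/-- The weight function `w²` of the contracted weighted graph `(Γ²,w²)`. -/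
def w2 (k : V → V → ℕ) (w : V → ℕ) : V2 k → ℕ := fun c => ∑ v ∈ fiber k c, w v

/-- The pushforward `α(d)` of a multidegree to the contracted graph. -/
def alphaMap (k : V → V → ℕ) (d : V → ℤ) : V2 k → ℤ := fun c => ∑ v ∈ fiber k c, d v

/-- The setoid on multidegrees of total degree `D`: two are equivalent if their
difference lies in `Λ`; the quotient is `Δ^d`. -/
def degSetoid (k : V → V → ℕ) (D : ℤ) : Setoid {d : V → ℤ // (∑ v, d v) = D} :=
  ⟨fun a b => (a : V → ℤ) - (b : V → ℤ) ∈ Lambda k, by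
    constructor
    · intro a; simpa using (Lambda k).zero_mem
    · intro a b h; have h2 := (Lambda k).neg_mem h; rwa [neg_sub] at h2
    · intro a b c h1 h2
      have h3 := (Lambda k).add_mem h1 h2
      rwa [sub_add_sub_cancel] at h3⟩

/-- Number of edges of the sub-multigraph induced on `A`. -/
def numEdgesIn (k : V → V → ℕ) (A : Finset V) : ℕ :=
  (∑ v ∈ A, k v v) + (∑ u ∈ A, ∑ v ∈ A.erase u, k u v) / 2

/-- Blow-up of a multigraph at the single bridge `a`–`b`: one exceptional
vertex is inserted in the middle of the bridge. -/
def blowK (k : V → V → ℕ) (a b : V) : (V ⊕ Unit) → (V ⊕ Unit) → ℕ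
  | Sum.inl u, Sum.inl v => if (u = a ∧ v = b) ∨ (u = b ∧ v = a) then 0 else k u v
  | Sum.inl u, Sum.inr _ => if u = a ∨ u = b then 1 else 0
  | Sum.inr _, Sum.inl v => if v = a ∨ v = b then 1 else 0
  | Sum.inr _, Sum.inr _ => 0

/-- Weight function of the blow-up at one bridge: exceptional vertex has weight 0. -/
def blowW (w : V → ℕ) : V ⊕ Unit → ℕ
  | Sum.inl v => w v
  | Sum.inr _ => 0

/-- Blow-up of a multigraph at a set `S` of bridges (given as ordered pairs):
one exceptional vertex is inserted in the middle of each bridge of `S`. -/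
def blowKS (k : V → V → ℕ) (S : Finset (V × V)) :
    (V ⊕ {p : V × V // p ∈ S}) → (V ⊕ {p : V × V // p ∈ S}) → ℕ
  | Sum.inl u, Sum.inl v => if (u, v) ∈ S ∨ (v, u) ∈ S then 0 else k u v
  | Sum.inl u, Sum.inr e => if u = e.1.1 ∨ u = e.1.2 then 1 else 0
  | Sum.inr e, Sum.inl v => if v = e.1.1 ∨ v = e.1.2 then 1 else 0
  | Sum.inr _, Sum.inr _ => 0

/-- Weight function of the blow-up at a set of bridges. -/
def blowWS (w : V → ℕ) (S : Finset (V × V)) : (V ⊕ {p : V × V // p ∈ S}) → ℕ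
  | Sum.inl v => w v
  | Sum.inr _ => 0

/-- Strictly balanced multidegree of total degree `D` on the blow-up `Γ̂_S`:
balanced (with degree 1 on each exceptional vertex), and the inequality is
strict for every proper nonempty `A` such that some edge between `A` and its
complement has no exceptional endpoint. -/
def IsStrictlyBalancedBlowS (k : V → V → ℕ) (w : V → ℕ) (S : Finset (V × V)) (D : ℤ)
    (dh : (V ⊕ {p : V × V // p ∈ S}) → ℤ) : Prop :=
  IsBalanced (blowKS k S) (blowWS w S) D dh ∧
    (∀ e : {p : V × V // p ∈ S}, dh (Sum.inr e) = 1) ∧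
    ∀ A : Finset (V ⊕ {p : V × V // p ∈ S}), A ≠ ∅ → A ≠ Finset.univ →
      (∃ u v : V, Sum.inl u ∈ A ∧ Sum.inl v ∉ A ∧ 0 < blowKS k S (Sum.inl u) (Sum.inl v)) →
      mA (blowKS k S) (blowWS w S) D A < (degA dh A : ℚ)

/-- Multiplicity function of the vine graph: two vertices joined by `δ` edges,
no loops. -/
def vineK (δ : ℕ) : Fin 2 → Fin 2 → ℕ := fun u v => if u = v then 0 else δ

/-- Weight function of the vine graph with weights `g₁, g₂`. -/
def vineW (g1 g2 : ℕ) : Fin 2 → ℕ := fun v => if v = 0 then g1 else g2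

/-- The data of a stable vine graph of genus `g` with weights `g₁, g₂` and `δ` edges. -/
def StableVine (g : ℤ) (g1 g2 δ : ℕ) : Prop :=
  2 ≤ δ ∧ ((g1 = 0 ∨ g2 = 0) → 3 ≤ δ) ∧ (g1 : ℤ) + (g2 : ℤ) + (δ : ℤ) - 1 = g

/-!
Put `n = 2g - 2`. For a symmetric multigraph `w_A ≡ δ_A (mod 2)` and `w_A + w_{Aᶜ} = n`, so
`m_A(d) = (d - g + 1) w_A / n + (w_A - δ_A) / 2` is an integer exactly when `n ∣ (d - g + 1) w_A`.
Stability gives `0 < w_A < n` for every proper nonempty `A`, so when `d - g + 1` is prime to `n`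
no balanced multidegree can attain `d_A = m_A(d)`. Conversely, if `m = gcd(d - g + 1, n) ≥ 2`
then `s = n / m` lies in `[1, g - 1]`, and a stable vine (two vertices joined by 2 or 3 edges)
with `w_{0} = s` has `m_{0}(d) ∈ ℤ`; putting exactly that degree on vertex `0` gives a balanced
multidegree that is not strictly balanced.
-/

theorem even_sum_sum_erase_of_symm {α : Type*} [DecidableEq α] (k : α → α → ℕ)
    (hk : ∀ u v, k u v = k v u) (s : Finset α) :
    Even (∑ u ∈ s, ∑ v ∈ s.erase u, k u v) := by
  induction s using Finset.induction_on with
  | empty => simp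
  | @insert a s ha ih =>
    have hsplit : ∀ u ∈ s,
        ∑ v ∈ (insert a s).erase u, k u v = k u a + ∑ v ∈ s.erase u, k u v := by
      intro u hu
      rw [Finset.erase_insert_of_ne (ne_of_mem_of_not_mem hu ha).symm,
        Finset.sum_insert fun h => ha (Finset.mem_of_mem_erase h)]
    have hswap : ∑ v ∈ s, k a v = ∑ u ∈ s, k u a := Finset.sum_congr rfl fun v _ => hk a v
    rw [Finset.sum_insert ha, Finset.erase_insert ha, Finset.sum_congr rfl hsplit,
      Finset.sum_add_distrib, hswap, ← add_assoc]
    exact (Even.add_self _).add ih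

theorem sum_sum_erase_intCast_of_symm {α : Type*} [DecidableEq α] (k : α → α → ℕ)
    (hk : ∀ u v, k u v = k v u) (s : Finset α) :
    ∑ v ∈ s, ∑ u ∈ s.erase v, (k u v : ℤ)
      = ((∑ u ∈ s, ∑ v ∈ s.erase u, k u v : ℕ) : ℤ) := by
  push_cast
  simp only [hk]

theorem exists_neighbor_of_connected {α : Type} {k : α → α → ℕ} (hk : ∀ u v, k u v = k v u)
    (hconn : (graphOf k).Connected) [Nontrivial α] (v : α) : ∃ u, u ≠ v ∧ 0 < k u v := by
  obtain ⟨u, hu⟩ := exists_ne v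
  obtain ⟨p⟩ := hconn.preconnected v u
  have hadj := p.adj_snd (SimpleGraph.Walk.not_nil_of_ne hu.symm)
  refine ⟨p.snd, hadj.1.symm, ?_⟩
  rw [hk]
  exact hadj.2.elim id fun h => hk v _ ▸ h

section

variable {k : V → V → ℕ} (w : V → ℕ)

theorem deltaA_eq_sum_sum_compl_of_symm (hk : ∀ u v, k u v = k v u) (A : Finset V) :
    deltaA k A = ∑ v ∈ A, ∑ u ∈ Aᶜ, (k u v : ℤ) := by
  simp only [deltaA, hk]

theorem deltaA_compl_of_symm (hk : ∀ u v, k u v = k v u) (A : Finset V) :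
    deltaA k Aᶜ = deltaA k A := by
  rw [deltaA_eq_sum_sum_compl_of_symm hk, compl_compl, deltaA, Finset.sum_comm]

theorem even_wA_sub_deltaA (hk : ∀ u v, k u v = k v u) (A : Finset V) :
    Even (wA k w A - deltaA k A) := by
  have hsplit : ∀ v ∈ A, ∑ u ∈ Finset.univ.erase v, (k u v : ℤ)
      = ∑ u ∈ A.erase v, (k u v : ℤ) + ∑ u ∈ Aᶜ, (k u v : ℤ) := by
    intro v hv
    rw [Finset.sum_erase_eq_sub (Finset.mem_univ v), Finset.sum_erase_eq_sub hv,
      ← Finset.sum_add_sum_compl A]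
    ring
  have heq : wA k w A - deltaA k A = 2 * ∑ v ∈ A, ((w v : ℤ) - 1 + k v v)
      + ((∑ u ∈ A, ∑ v ∈ A.erase u, k u v : ℕ) : ℤ) := by
    rw [wA, Finset.sum_congr rfl fun v hv => congrArg _ (hsplit v hv),
      deltaA_eq_sum_sum_compl_of_symm hk, ← sum_sum_erase_intCast_of_symm k hk, Finset.mul_sum,
      ← Finset.sum_sub_distrib, ← Finset.sum_add_distrib]
    exact Finset.sum_congr rfl fun v _ => by ring
  rw [heq]
  exact (even_two_mul _).add (even_sum_sum_erase_of_symm k hk A).natCast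

theorem wA_univ_of_symm (hk : ∀ u v, k u v = k v u) :
    wA k w Finset.univ = 2 * genus k w - 2 := by
  obtain ⟨t, ht⟩ := even_sum_sum_erase_of_symm k hk Finset.univ
  have hhalf : (∑ u, ∑ v ∈ Finset.univ.erase u, k u v) / 2 = t := by omega
  have hinner : ∑ v, ∑ u ∈ Finset.univ.erase v, (k u v : ℤ) = 2 * (t : ℤ) := by
    rw [sum_sum_erase_intCast_of_symm k hk, ht]
    push_cast
    ring
  simp only [wA, genus, numEdges, hhalf, Finset.sum_add_distrib, Finset.sum_sub_distrib,
    ← Finset.mul_sum, hinner, Finset.sum_const, Finset.card_univ]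
  push_cast
  ring

theorem wA_add_wA_compl_of_symm (hk : ∀ u v, k u v = k v u) (A : Finset V) :
    wA k w A + wA k w Aᶜ = 2 * genus k w - 2 := by
  rw [← wA_univ_of_symm w hk, wA, wA, wA, Finset.sum_add_sum_compl]

theorem wA_singleton_pos (hk : ∀ u v, k u v = k v u) (hst : IsStable k w) [Nontrivial V]
    (v : V) : 0 < wA k w {v} := by
  obtain ⟨u, huv, hpos⟩ := exists_neighbor_of_connected hk hst.1 v
  have hval : 1 ≤ ∑ u ∈ Finset.univ.erase v, k u v :=
    hpos.trans_le (Finset.single_le_sum (f := (k · v)) (fun _ _ => Nat.zero_le _)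
      (Finset.mem_erase.mpr ⟨huv, Finset.mem_univ u⟩))
  have hstab := hst.2 v
  rw [wA, Finset.sum_singleton, ← Nat.cast_sum]
  omega

theorem wA_pos (hk : ∀ u v, k u v = k v u) (hst : IsStable k w) [Nontrivial V]
    {A : Finset V} (hA : A.Nonempty) : 0 < wA k w A :=
  Finset.sum_pos (fun v _ => by
    simpa only [wA, Finset.sum_singleton] using wA_singleton_pos w hk hst v) hA

theorem mA_add_mA_compl_of_symm (hk : ∀ u v, k u v = k v u) (hg : genus k w ≠ 1) (D : ℤ)
    (A : Finset V) : mA k w D A + mA k w D Aᶜ = D - deltaA k A := by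
  have hn : ((2 * genus k w - 2 : ℤ) : ℚ) ≠ 0 := Int.cast_ne_zero.2 (by omega)
  have hsum : (wA k w A : ℚ) + wA k w Aᶜ = ((2 * genus k w - 2 : ℤ) : ℚ) := by
    exact_mod_cast wA_add_wA_compl_of_symm w hk A
  rw [mA, mA, deltaA_compl_of_symm hk]
  calc _ = (D : ℚ) * (wA k w A + wA k w Aᶜ) / ((2 * genus k w - 2 : ℤ) : ℚ) - deltaA k A := by
        ring
    _ = D - deltaA k A := by rw [hsum, mul_div_cancel_right₀ _ hn]

theorem exists_mA_eq_intCast_iff (hk : ∀ u v, k u v = k v u) (hg : genus k w ≠ 1) (D : ℤ)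
    (A : Finset V) : (∃ n : ℤ, mA k w D A = n) ↔
      2 * genus k w - 2 ∣ (D - genus k w + 1) * wA k w A := by
  obtain ⟨M, hM⟩ := even_wA_sub_deltaA w hk A
  have hn : ((2 * genus k w - 2 : ℤ) : ℚ) ≠ 0 := Int.cast_ne_zero.2 (by omega)
  have hmA : mA k w D A
      = (((D - genus k w + 1) * wA k w A : ℤ) : ℚ) / ((2 * genus k w - 2 : ℤ) : ℚ) + M := by
    rw [mA, show deltaA k A = wA k w A - (M + M) by omega]
    field_simp
    push_cast
    ring
  rw [hmA]
  constructor
  · rintro ⟨n, hn'⟩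
    refine ⟨n - M, ?_⟩
    rw [← eq_sub_iff_add_eq, div_eq_iff hn] at hn'
    have hcast : (((D - genus k w + 1) * wA k w A : ℤ) : ℚ)
        = (((2 * genus k w - 2) * (n - M) : ℤ) : ℚ) := by
      rw [hn']
      push_cast
      ring
    exact_mod_cast hcast
  · rintro ⟨c, hc⟩
    refine ⟨c + M, ?_⟩
    rw [hc, Int.cast_mul, mul_div_cancel_left₀ _ hn, Int.cast_add]

theorem isDGeneral_of_gcd_eq_one (hk : ∀ u v, k u v = k v u) (hst : IsStable k w)
    (hg : 2 ≤ genus k w) {D : ℤ} (hgcd : Int.gcd (D - genus k w + 1) (2 * genus k w - 2) = 1) :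
    IsDGeneral k w D := by
  intro d hbal
  refine ⟨hbal, fun A hA hAuniv => (hbal.2 A).lt_of_ne fun heq => ?_⟩
  obtain ⟨a, ha⟩ := Finset.nonempty_iff_ne_empty.2 hA
  obtain ⟨b, hb⟩ : ∃ b, b ∉ A := by
    by_contra! h
    exact hAuniv (Finset.eq_univ_of_forall h)
  have : Nontrivial V := ⟨a, b, fun h => hb (h ▸ ha)⟩
  have hpos := wA_pos w hk hst ⟨a, ha⟩
  have hlt : wA k w A < 2 * genus k w - 2 := by
    linarith [wA_pos w hk hst ⟨b, Finset.mem_compl.2 hb⟩, wA_add_wA_compl_of_symm w hk A]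
  have hdvd : 2 * genus k w - 2 ∣ wA k w A :=
    (Int.isCoprime_iff_gcd_eq_one.2 hgcd).symm.dvd_of_dvd_mul_left
      ((exists_mA_eq_intCast_iff w hk (by omega) D A).1 ⟨_, heq⟩)
  exact hpos.ne' (Int.eq_zero_of_dvd_of_nonneg_of_lt hpos.le hlt hdvd)

theorem mA_compl_le_degA_compl (hk : ∀ u v, k u v = k v u) (hg : genus k w ≠ 1) {D : ℤ}
    {d : V → ℤ} (hd : degA d Finset.univ = D) {A : Finset V}
    (hA : (degA d A : ℚ) ≤ mA k w D A + deltaA k A) : mA k w D Aᶜ ≤ degA d Aᶜ := by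
  have hdeg : degA d A + degA d Aᶜ = D := by
    rw [← hd, degA, degA, degA, Finset.sum_add_sum_compl]
  have hdegQ : (degA d A : ℚ) + degA d Aᶜ = D := by exact_mod_cast hdeg
  linarith [mA_add_mA_compl_of_symm w hk hg D A]

end

theorem vineK_symm (δ : ℕ) (u v : Fin 2) : vineK δ u v = vineK δ v u := by
  simp only [vineK, eq_comm]

theorem Fin.univ_erase_zero_two : Finset.univ.erase (0 : Fin 2) = {1} := by decide

theorem Fin.univ_erase_one_two : Finset.univ.erase (1 : Fin 2) = {0} := by decide

theorem genus_vine (g1 g2 δ : ℕ) : genus (vineK δ) (vineW g1 g2) = g1 + g2 + δ - 1 := by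
  simp only [genus, numEdges, vineK, vineW, Fin.sum_univ_two, Fin.univ_erase_zero_two,
    Fin.univ_erase_one_two, Finset.sum_singleton, Finset.sum_const_zero, Fintype.card_fin,
    ↓reduceIte, one_ne_zero, zero_ne_one, zero_add, Nat.cast_ite, Nat.cast_add, Int.natCast_ediv,
    Nat.cast_ofNat]
  omega

theorem wA_vine_zero (g1 g2 δ : ℕ) : wA (vineK δ) (vineW g1 g2) {0} = 2 * (g1 : ℤ) - 2 + δ := by
  simp [wA, vineK, vineW]

theorem deltaA_vine_zero (δ : ℕ) : deltaA (vineK δ) {0} = δ := by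
  simp [deltaA, Finset.compl_singleton, Fin.univ_erase_zero_two, vineK]

theorem StableVine.genus_eq {g : ℤ} {g1 g2 δ : ℕ} (h : StableVine g g1 g2 δ) :
    genus (vineK δ) (vineW g1 g2) = g := by
  rw [genus_vine, h.2.2]

theorem StableVine.isStable {g : ℤ} {g1 g2 δ : ℕ} (h : StableVine g g1 g2 δ) :
    IsStable (vineK δ) (vineW g1 g2) := by
  obtain ⟨hδ, hδ3, -⟩ := h
  refine ⟨?_, fun v hv => ?_⟩
  · have hadj : (graphOf (vineK δ)).Adj 0 1 :=
      ⟨by decide, Or.inl (by rw [vineK, if_neg (by decide)]; omega)⟩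
    refine SimpleGraph.connected_iff_exists_forall_reachable _ |>.2 ⟨0, fun v => ?_⟩
    fin_cases v
    · rfl
    · exact hadj.reachable
  · fin_cases v <;> simp_all [vineK, vineW, Fin.univ_erase_zero_two, Fin.univ_erase_one_two]

theorem exists_stableVine_wA_eq {g s : ℤ} (hs : 1 ≤ s) (hsg : s ≤ g - 1) :
    ∃ g1 g2 δ : ℕ, StableVine g g1 g2 δ ∧ 2 * (g1 : ℤ) - 2 + δ = s := by
  obtain ⟨r, hr | hr⟩ := Int.even_or_odd' s
  · refine ⟨r.toNat, (g - 1 - r).toNat, 2, ⟨le_rfl, ?_, ?_⟩, ?_⟩ <;> omega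
  · refine ⟨r.toNat, (g - 2 - r).toNat, 3, ⟨by norm_num, fun _ => le_rfl, ?_⟩, ?_⟩ <;> omega

theorem StableVine.not_isDGeneral {g D : ℤ} {g1 g2 δ : ℕ} (h : StableVine g g1 g2 δ)
    (hg : 2 ≤ g) (hdvd : 2 * g - 2 ∣ (D - g + 1) * (2 * g1 - 2 + δ)) :
    ¬ IsDGeneral (vineK δ) (vineW g1 g2) D := by
  intro hgen
  have hg1 : genus (vineK δ) (vineW g1 g2) ≠ 1 := by rw [h.genus_eq]; omega
  obtain ⟨d0, hd0⟩ := (exists_mA_eq_intCast_iff (vineW g1 g2) (vineK_symm δ) hg1 D {0}).2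
    (by rwa [h.genus_eq, wA_vine_zero])
  set d : Fin 2 → ℤ := ![d0, D - d0]
  have hd : degA d Finset.univ = D := by simp [degA, d]
  have hd0' : degA d {0} = d0 := by simp [degA, d]
  have hempty : mA (vineK δ) (vineW g1 g2) D ∅ = degA d ∅ := by simp [mA, wA, deltaA, degA]
  have hbal : IsBalanced (vineK δ) (vineW g1 g2) D d := by
    refine ⟨hd, fun A => ?_⟩
    obtain rfl | rfl | rfl | rfl : A = ∅ ∨ A = {0} ∨ A = {0}ᶜ ∨ A = ∅ᶜ := by revert A; decide
    · exact hempty.le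
    · rw [hd0, hd0']
    · refine mA_compl_le_degA_compl _ (vineK_symm δ) hg1 hd ?_
      rw [hd0, hd0', deltaA_vine_zero]
      simp
    · refine mA_compl_le_degA_compl _ (vineK_symm δ) hg1 hd ?_
      simp [hempty, deltaA]
  have hstrict := (hgen d hbal).2 {0} (by simp) (by decide)
  rw [hd0, hd0'] at hstrict
  exact lt_irrefl _ hstrict

/-- `gcd(d−g+1, 2g−2) = 1` iff every stable weighted graph of
genus `g` is `d`-general. -/
theorem stmt16 (g d : ℤ) (hg : 2 ≤ g) :
    Int.gcd (d - g + 1) (2 * g - 2) = 1 ↔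
      ∀ (V : Type) [Fintype V] [DecidableEq V] (k : V → V → ℕ) (w : V → ℕ),
        (∀ u v, k u v = k v u) → IsStable k w → genus k w = g →
          IsDGeneral k w d := by
  constructor
  · rintro hgcd V _ _ k w hk hst rfl
    exact isDGeneral_of_gcd_eq_one w hk hst hg hgcd
  · intro H
    by_contra hgcd
    obtain ⟨s, hs⟩ := Int.gcd_dvd_right (d - g + 1) (2 * g - 2)
    have hm : 2 ≤ Int.gcd (d - g + 1) (2 * g - 2) := by
      have := Int.gcd_eq_zero_iff.not.2 (by omega : ¬ (d - g + 1 = 0 ∧ 2 * g - 2 = 0))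
      omega
    obtain ⟨g1, g2, δ, hv, hW⟩ :=
      exists_stableVine_wA_eq (g := g) (s := s) (by nlinarith) (by nlinarith)
    refine hv.not_isDGeneral hg ?_ (H _ _ _ (vineK_symm δ) hv.isStable hv.genus_eq)
    rw [hW, hs]
    exact mul_dvd_mul_right (Int.gcd_dvd_left _ _) s
end
end

section
/- Let (Γ,w) be a stable weighted graph of genus g ≥ 2, let e be a bridge of Γ whose removal separates the vertex set into A and A^c, and let u_A be the endpoint of e lying in A. Let d̂ be a balanced multidegree of total degree d on the blow-up Γ̂_{{e}}. Then d̂_A = m_A(d) and d̂_{A^c} = m_{A^c}(d) (computed in Γ̂_{{e}}), and the multidegree d^X on Γ defined by d^X(u_A) = d̂(u_A) + 1 and d^X(v) = d̂(v) for all other v ∈ V is a balanced multidegree of total degree d on (Γ,w) satisfying d^X_{A^c} = m_{A^c}(d) (computed in Γ); in particular d^X is balanced but not strictly balanced. -/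
open Finset

noncomputable section
open scoped Classical

variable {V : Type} [Fintype V] [DecidableEq V]

section Stmt17Aux

variable {V : Type} [Fintype V] [DecidableEq V]

lemma aux_sum_image_inl {M : Type*} [AddCommMonoid M] (C : Finset V) (f : V ⊕ Unit → M) :
    ∑ x ∈ C.image Sum.inl, f x = ∑ v ∈ C, f (Sum.inl v) :=
  Finset.sum_image (by simp)

lemma aux_inr_not_mem (C : Finset V) : (Sum.inr () : V ⊕ Unit) ∉ C.image Sum.inl := by simp

lemma aux_compl_image (C : Finset V) :
    (C.image (Sum.inl : V → V ⊕ Unit))ᶜ = insert (Sum.inr ()) (Cᶜ.image Sum.inl) := by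
  ext x
  cases x with
  | inl v => simp
  | inr u => simp

lemma aux_compl_insert (C : Finset V) :
    (insert (Sum.inr ()) (C.image (Sum.inl : V → V ⊕ Unit)))ᶜ = Cᶜ.image Sum.inl := by
  ext x
  cases x with
  | inl v => simp
  | inr u => simp

lemma aux_even_sum (k : V → V → ℕ) (hsym : ∀ u v, k u v = k v u) (s : Finset V) :
    Even (∑ u ∈ s, ∑ v ∈ s.erase u, k u v) := by
  classical
  induction s using Finset.induction_on with
  | empty => simp
  | insert x s hx ih =>
    rw [Finset.sum_insert hx, Finset.erase_insert hx]
    have key : ∑ u ∈ s, ∑ v ∈ (insert x s).erase u, k u v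
        = ∑ u ∈ s, (k u x + ∑ v ∈ s.erase u, k u v) := by
      refine Finset.sum_congr rfl fun u hu => ?_
      rw [Finset.erase_insert_of_ne (Ne.symm (fun (h : u = x) => hx (h ▸ hu))),
        Finset.sum_insert (fun h => hx (Finset.mem_of_mem_erase h))]
    rw [key, Finset.sum_add_distrib]
    have hxx : ∑ u ∈ s, k u x = ∑ v ∈ s, k x v :=
      Finset.sum_congr rfl fun u _ => hsym u x
    obtain ⟨r, hr⟩ := ih
    exact ⟨∑ v ∈ s, k x v + r, by rw [hxx, hr]; ring⟩

lemma aux_offdiag_add_diag {W : Type} [Fintype W] [DecidableEq W] (f : W → W → ℕ) :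
    (∑ u, ∑ v ∈ Finset.univ.erase u, f u v) + ∑ u, f u u = ∑ u, ∑ v, f u v := by
  rw [← Finset.sum_add_distrib]
  exact Finset.sum_congr rfl fun u _ => Finset.sum_erase_add _ _ (Finset.mem_univ u)

lemma aux_swap_sum (k : V → V → ℕ) :
    (∑ v, ∑ u ∈ Finset.univ.erase v, k u v) = ∑ u, ∑ v ∈ Finset.univ.erase u, k u v := by
  rw [Finset.sum_comm' (t' := Finset.univ) (s' := fun u => Finset.univ.erase u)
    (by intro x y; simp [ne_comm, eq_comm])]

lemma aux_ind_sum (C C' : Finset V) (a b : V) :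
    ∑ u ∈ C, ∑ v ∈ C', (if u = a ∧ v = b then (1 : ℕ) else 0)
      = if a ∈ C ∧ b ∈ C' then 1 else 0 := by
  have h1 : ∀ u, (∑ v ∈ C', (if u = a ∧ v = b then (1 : ℕ) else 0))
      = if u = a then (if b ∈ C' then 1 else 0) else 0 := by
    intro u
    by_cases hu : u = a
    · subst hu
      simp [Finset.sum_ite_eq' C' b (fun _ => (1 : ℕ))]
    · simp [hu]
  rw [Finset.sum_congr rfl fun u _ => h1 u,
    Finset.sum_ite_eq' C a (fun _ => if b ∈ C' then (1 : ℕ) else 0)]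
  by_cases hA : a ∈ C <;> simp [hA]

lemma aux_or_ind_sum (C : Finset V) {a b : V} (hab : a ≠ b) :
    ∑ u ∈ C, (if u = a ∨ u = b then (1 : ℕ) else 0)
      = (if a ∈ C then 1 else 0) + (if b ∈ C then 1 else 0) := by
  have h1 : ∀ u, (if u = a ∨ u = b then (1 : ℕ) else 0)
      = (if u = a then 1 else 0) + (if u = b then 1 else 0) := by
    intro u
    by_cases h1 : u = a <;> by_cases h2 : u = b <;> simp_all
  rw [Finset.sum_congr rfl fun u _ => h1 u, Finset.sum_add_distrib,
    Finset.sum_ite_eq' C a (fun _ => (1 : ℕ)), Finset.sum_ite_eq' C b (fun _ => (1 : ℕ))]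

lemma aux_blow_inl_inl (k : V → V → ℕ) {a b : V} (hab : a ≠ b)
    (hk1 : k a b = 1) (hk2 : k b a = 1) (u v : V) :
    blowK k a b (Sum.inl u) (Sum.inl v)
      + ((if u = a ∧ v = b then 1 else 0) + (if u = b ∧ v = a then 1 else 0)) = k u v := by
  show (if (u = a ∧ v = b) ∨ (u = b ∧ v = a) then 0 else k u v) + _ = _
  by_cases h1 : u = a ∧ v = b
  · rcases h1 with ⟨rfl, rfl⟩
    have h2 : ¬(u = v) := hab
    simp [h2, hk1]
  · by_cases h2 : u = b ∧ v = a
    · rcases h2 with ⟨rfl, rfl⟩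
      have h3 : ¬(u = v) := fun h => hab h.symm
      simp [h1, h3, hk2]
    · have h3 : ¬((u = a ∧ v = b) ∨ (u = b ∧ v = a)) := by tauto
      simp [h3, h1, h2]

lemma aux_double_sum_blow (k : V → V → ℕ) {a b : V} (hab : a ≠ b)
    (hk1 : k a b = 1) (hk2 : k b a = 1) (C C' : Finset V) :
    (∑ u ∈ C, ∑ v ∈ C', blowK k a b (Sum.inl u) (Sum.inl v))
      + ((if a ∈ C ∧ b ∈ C' then 1 else 0) + (if b ∈ C ∧ a ∈ C' then 1 else 0))
      = ∑ u ∈ C, ∑ v ∈ C', k u v := by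
  have := aux_ind_sum C C' a b
  have := aux_ind_sum C C' b a
  calc (∑ u ∈ C, ∑ v ∈ C', blowK k a b (Sum.inl u) (Sum.inl v))
        + ((if a ∈ C ∧ b ∈ C' then 1 else 0) + (if b ∈ C ∧ a ∈ C' then 1 else 0))
      = ∑ u ∈ C, ∑ v ∈ C', (blowK k a b (Sum.inl u) (Sum.inl v)
          + ((if u = a ∧ v = b then 1 else 0) + (if u = b ∧ v = a then 1 else 0))) := by
        simp only [Finset.sum_add_distrib]
        rw [aux_ind_sum C C' a b, aux_ind_sum C C' b a]
    _ = ∑ u ∈ C, ∑ v ∈ C', k u v :=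
        Finset.sum_congr rfl fun u _ => Finset.sum_congr rfl fun v _ =>
          aux_blow_inl_inl k hab hk1 hk2 u v

end Stmt17Aux


section Stmt17Aux2

variable {V : Type} [Fintype V] [DecidableEq V]

lemma aux_blow_loop (k : V → V → ℕ) {a b : V} (hab : a ≠ b) (v : V) :
    blowK k a b (Sum.inl v) (Sum.inl v) = k v v := by
  show (if (v = a ∧ v = b) ∨ (v = b ∧ v = a) then 0 else k v v) = k v v
  have h : ¬((v = a ∧ v = b) ∨ (v = b ∧ v = a)) := by
    rintro (⟨h1, h2⟩ | ⟨h1, h2⟩)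
    · exact hab (h1.symm.trans h2)
    · exact hab (h2.symm.trans h1)
  rw [if_neg h]

lemma aux_col_inl (k : V → V → ℕ) {a b : V} (hab : a ≠ b)
    (hk1 : k a b = 1) (hk2 : k b a = 1) (v : V) :
    ∑ x : V ⊕ Unit, blowK k a b x (Sum.inl v) = ∑ u, k u v := by
  rw [Fintype.sum_sum_type]
  have h := aux_double_sum_blow k hab hk1 hk2 Finset.univ {v}
  simp only [Finset.sum_singleton, Finset.mem_univ, true_and, Finset.mem_singleton] at h
  have h2 : ∑ x : Unit, blowK k a b (Sum.inr x) (Sum.inl v)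
      = (if v = a ∨ v = b then 1 else 0) := by
    simp [blowK]
  rw [h2]
  by_cases hva : v = a
  · subst hva
    rw [if_neg (show ¬ b = v from fun h => hab h.symm), if_pos rfl] at h
    rw [if_pos (Or.inl rfl)]
    omega
  · by_cases hvb : v = b
    · subst hvb
      rw [if_pos rfl, if_neg (show ¬ a = v from fun h => hab h)] at h
      rw [if_pos (Or.inr rfl)]
      omega
    · rw [if_neg (show ¬ b = v from fun h => hvb h.symm),
        if_neg (show ¬ a = v from fun h => hva h.symm)] at h
      rw [if_neg (show ¬ (v = a ∨ v = b) by tauto)]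
      omega

lemma aux_col_inr (k : V → V → ℕ) {a b : V} (hab : a ≠ b) :
    ∑ x : V ⊕ Unit, blowK k a b x (Sum.inr ()) = 2 := by
  rw [Fintype.sum_sum_type]
  have h1 : ∑ u : V, blowK k a b (Sum.inl u) (Sum.inr ()) = 2 := by
    have hpt : ∀ u, blowK k a b (Sum.inl u) (Sum.inr ())
        = if u = a ∨ u = b then 1 else 0 := fun u => rfl
    rw [Finset.sum_congr rfl fun u _ => hpt u, aux_or_ind_sum Finset.univ hab]
    simp
  have h2 : ∑ x : Unit, blowK k a b (Sum.inr x) (Sum.inr ()) = 0 := by simp [blowK]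
  omega

lemma aux_colerase_inl (k : V → V → ℕ) {a b : V} (hab : a ≠ b)
    (hk1 : k a b = 1) (hk2 : k b a = 1) (v : V) :
    ∑ x ∈ Finset.univ.erase (Sum.inl v), blowK k a b x (Sum.inl v)
      = ∑ u ∈ Finset.univ.erase v, k u v := by
  have h1 := Finset.sum_erase_add Finset.univ (fun x => blowK k a b x (Sum.inl v))
    (Finset.mem_univ (Sum.inl v))
  have h2 := Finset.sum_erase_add Finset.univ (fun u => k u v) (Finset.mem_univ v)
  have h3 := aux_col_inl k hab hk1 hk2 v
  have h4 := aux_blow_loop k hab v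
  omega

lemma aux_colerase_inr (k : V → V → ℕ) {a b : V} (hab : a ≠ b) :
    ∑ x ∈ Finset.univ.erase (Sum.inr ()), blowK k a b x (Sum.inr ()) = 2 := by
  have h1 := Finset.sum_erase_add Finset.univ (fun x => blowK k a b x (Sum.inr ()))
    (Finset.mem_univ (Sum.inr () : V ⊕ Unit))
  have h3 := aux_col_inr k hab (b := b)
  have h4 : blowK k a b (Sum.inr ()) (Sum.inr ()) = 0 := rfl
  omega

lemma aux_wA_image (k : V → V → ℕ) (w : V → ℕ) {a b : V} (hab : a ≠ b)
    (hk1 : k a b = 1) (hk2 : k b a = 1) (C : Finset V) :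
    wA (blowK k a b) (blowW w) (C.image Sum.inl) = wA k w C := by
  unfold wA
  rw [aux_sum_image_inl]
  refine Finset.sum_congr rfl fun v _ => ?_
  have h1 : blowW w (Sum.inl v) = w v := rfl
  have h2 := aux_blow_loop k hab v
  have h3 := aux_colerase_inl k hab hk1 hk2 v
  rw [h1, h2]
  congr 1
  have h4 := congrArg (Nat.cast : ℕ → ℤ) h3
  push_cast at h4
  exact h4

lemma aux_wA_insert (k : V → V → ℕ) (w : V → ℕ) {a b : V} (hab : a ≠ b)
    (hk1 : k a b = 1) (hk2 : k b a = 1) (C : Finset V) :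
    wA (blowK k a b) (blowW w) (insert (Sum.inr ()) (C.image Sum.inl)) = wA k w C := by
  have himg := aux_wA_image k w hab hk1 hk2 C
  unfold wA at himg ⊢
  rw [Finset.sum_insert (aux_inr_not_mem C)]
  have hz : (2 * (blowW w (Sum.inr () : V ⊕ Unit) : ℤ) - 2
      + 2 * (blowK k a b (Sum.inr ()) (Sum.inr ()) : ℤ)
      + ∑ u ∈ Finset.univ.erase (Sum.inr ()), (blowK k a b u (Sum.inr ()) : ℤ)) = 0 := by
    have h3 := aux_colerase_inr k hab (b := b)
    have h5 : (∑ u ∈ Finset.univ.erase (Sum.inr () : V ⊕ Unit),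
        (blowK k a b u (Sum.inr ()) : ℤ)) = 2 := by
      have h4 := congrArg (Nat.cast : ℕ → ℤ) h3
      push_cast at h4
      exact h4
    rw [h5]
    show 2 * ((0 : ℕ) : ℤ) - 2 + 2 * ((0 : ℕ) : ℤ) + 2 = 0
    norm_num
  rw [hz, zero_add]
  exact himg

lemma aux_genus_blow (k : V → V → ℕ) (w : V → ℕ) {a b : V} (hab : a ≠ b)
    (hk1 : k a b = 1) (hk2 : k b a = 1) :
    genus (blowK k a b) (blowW w) = genus k w := by
  have hdiag : ∑ x : V ⊕ Unit, blowK k a b x x = ∑ v, k v v := by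
    rw [Fintype.sum_sum_type]
    have hz : ∑ x : Unit, blowK k a b (Sum.inr x) (Sum.inr x) = 0 := by simp [blowK]
    rw [hz, add_zero]
    exact Finset.sum_congr rfl fun v _ => aux_blow_loop k hab v
  have hfull : (∑ x : V ⊕ Unit, ∑ y : V ⊕ Unit, blowK k a b x y)
      = (∑ u, ∑ v, k u v) + 2 := by
    have hA : ∀ u : V, ∑ y : V ⊕ Unit, blowK k a b (Sum.inl u) y
        = (∑ v, blowK k a b (Sum.inl u) (Sum.inl v)) + (if u = a ∨ u = b then 1 else 0) := by
      intro u
      rw [Fintype.sum_sum_type]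
      have h2 : ∑ x : Unit, blowK k a b (Sum.inl u) (Sum.inr x)
          = (if u = a ∨ u = b then 1 else 0) := by simp [blowK]
      rw [h2]
    have hB : ∑ y : V ⊕ Unit, blowK k a b (Sum.inr ()) y = 2 := by
      rw [Fintype.sum_sum_type]
      have hpt : ∀ v, blowK k a b (Sum.inr ()) (Sum.inl v)
          = if v = a ∨ v = b then 1 else 0 := fun v => rfl
      rw [Finset.sum_congr rfl fun v _ => hpt v, aux_or_ind_sum Finset.univ hab]
      simp [blowK]
    have hD := aux_double_sum_blow k hab hk1 hk2 Finset.univ Finset.univ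
    simp only [Finset.mem_univ, true_and, if_true] at hD
    rw [Fintype.sum_sum_type]
    rw [Finset.sum_congr rfl fun u _ => hA u, Finset.sum_add_distrib,
      aux_or_ind_sum Finset.univ hab]
    have hBsum : ∑ x : Unit, ∑ y : V ⊕ Unit, blowK k a b (Sum.inr x) y = 2 := by
      simpa using hB
    rw [hBsum]
    simp only [Finset.mem_univ, if_true]
    omega
  have h1 := aux_offdiag_add_diag (blowK k a b)
  have h2 := aux_offdiag_add_diag k
  have hedges : numEdges (blowK k a b) = numEdges k + 1 := by
    unfold numEdges
    omega
  unfold genus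
  have hcard : Fintype.card (V ⊕ Unit) = Fintype.card V + 1 := by simp
  have hw : ∑ x : V ⊕ Unit, (blowW w x : ℤ) = ∑ v, (w v : ℤ) := by
    rw [Fintype.sum_sum_type]
    simp [blowW]
  rw [hw, hedges, hcard]
  push_cast
  ring

lemma aux_wA_univ (k : V → V → ℕ) (w : V → ℕ) (hsym : ∀ u v, k u v = k v u) :
    wA k w Finset.univ = 2 * genus k w - 2 := by
  obtain ⟨r, hr⟩ := aux_even_sum k hsym Finset.univ
  have h1 : wA k w Finset.univ
      = 2 * (∑ v, (w v : ℤ)) - 2 * (Fintype.card V : ℤ) + 2 * (∑ v, (k v v : ℤ))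
        + ∑ v, ∑ u ∈ Finset.univ.erase v, (k u v : ℤ) := by
    simp only [wA, Finset.sum_add_distrib, Finset.sum_sub_distrib, Finset.sum_const,
      Finset.card_univ, nsmul_eq_mul, ← Finset.mul_sum]
    ring
  have h2 : (∑ v, ∑ u ∈ Finset.univ.erase v, (k u v : ℤ))
      = ((∑ u, ∑ v ∈ Finset.univ.erase u, k u v : ℕ) : ℤ) := by
    rw [← aux_swap_sum k]
    push_cast
    rfl
  have h3 : (∑ v, (k v v : ℤ)) = ((∑ v, k v v : ℕ) : ℤ) := by push_cast; rfl
  have h4 : (∑ v, (w v : ℤ)) = ((∑ v, w v : ℕ) : ℤ) := by push_cast; rfl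
  unfold genus numEdges
  rw [h1, h2, h3, h4]
  omega

lemma aux_delta_cast {W : Type} [Fintype W] [DecidableEq W] (k : W → W → ℕ) (C : Finset W) :
    deltaA k C = ((∑ u ∈ C, ∑ v ∈ Cᶜ, k u v : ℕ) : ℤ) := by
  unfold deltaA
  push_cast
  rfl

lemma aux_delta_image (k : V → V → ℕ) {a b : V} (hab : a ≠ b)
    (hk1 : k a b = 1) (hk2 : k b a = 1) (C : Finset V) :
    deltaA (blowK k a b) (C.image Sum.inl)
      = deltaA k C + (if a ∈ C then 1 else 0) + (if b ∈ C then 1 else 0)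
        - (if a ∈ C ∧ b ∉ C then 1 else 0) - (if b ∈ C ∧ a ∉ C then 1 else 0) := by
  have hN : (∑ x ∈ C.image Sum.inl, ∑ y ∈ (C.image Sum.inl)ᶜ, blowK k a b x y)
      = ∑ u ∈ C, ((if u = a ∨ u = b then 1 else 0)
          + ∑ v ∈ Cᶜ, blowK k a b (Sum.inl u) (Sum.inl v)) := by
    rw [aux_sum_image_inl]
    refine Finset.sum_congr rfl fun u _ => ?_
    rw [aux_compl_image, Finset.sum_insert (aux_inr_not_mem Cᶜ), aux_sum_image_inl]
    rfl
  have hD := aux_double_sum_blow k hab hk1 hk2 C Cᶜ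
  simp only [Finset.mem_compl] at hD
  have hO := aux_or_ind_sum C hab
  have key : (∑ x ∈ C.image Sum.inl, ∑ y ∈ (C.image Sum.inl)ᶜ, blowK k a b x y)
      + (if a ∈ C ∧ b ∉ C then 1 else 0) + (if b ∈ C ∧ a ∉ C then 1 else 0)
      = (∑ u ∈ C, ∑ v ∈ Cᶜ, k u v)
        + (if a ∈ C then 1 else 0) + (if b ∈ C then 1 else 0) := by
    rw [hN, Finset.sum_add_distrib, hO]
    omega
  rw [aux_delta_cast (blowK k a b) (C.image Sum.inl), aux_delta_cast k C]
  have key2 := congrArg (Nat.cast : ℕ → ℤ) key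
  push_cast at key2 ⊢
  split_ifs at key2 ⊢ <;> first | omega | tauto

lemma aux_delta_insert (k : V → V → ℕ) {a b : V} (hab : a ≠ b)
    (hk1 : k a b = 1) (hk2 : k b a = 1) (C : Finset V) :
    deltaA (blowK k a b) (insert (Sum.inr ()) (C.image Sum.inl))
      = deltaA k C + (if a ∉ C then 1 else 0) + (if b ∉ C then 1 else 0)
        - (if a ∈ C ∧ b ∉ C then 1 else 0) - (if b ∈ C ∧ a ∉ C then 1 else 0) := by
  have hN : (∑ x ∈ insert (Sum.inr ()) (C.image Sum.inl),
        ∑ y ∈ (insert (Sum.inr ()) (C.image Sum.inl))ᶜ, blowK k a b x y)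
      = (∑ v ∈ Cᶜ, (if v = a ∨ v = b then 1 else 0))
        + ∑ u ∈ C, ∑ v ∈ Cᶜ, blowK k a b (Sum.inl u) (Sum.inl v) := by
    rw [Finset.sum_insert (aux_inr_not_mem C), aux_compl_insert]
    congr 1
    · rw [aux_sum_image_inl]
      exact Finset.sum_congr rfl fun v _ => rfl
    · rw [aux_sum_image_inl]
      exact Finset.sum_congr rfl fun u _ => aux_sum_image_inl Cᶜ _
  have hD := aux_double_sum_blow k hab hk1 hk2 C Cᶜ
  simp only [Finset.mem_compl] at hD
  have hO := aux_or_ind_sum Cᶜ hab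
  simp only [Finset.mem_compl] at hO
  have key : (∑ x ∈ insert (Sum.inr ()) (C.image Sum.inl),
        ∑ y ∈ (insert (Sum.inr ()) (C.image Sum.inl))ᶜ, blowK k a b x y)
      + (if a ∈ C ∧ b ∉ C then 1 else 0) + (if b ∈ C ∧ a ∉ C then 1 else 0)
      = (∑ u ∈ C, ∑ v ∈ Cᶜ, k u v)
        + (if a ∉ C then 1 else 0) + (if b ∉ C then 1 else 0) := by
    rw [hN, hO]
    omega
  rw [aux_delta_cast (blowK k a b) _, aux_delta_cast k C]
  have key2 := congrArg (Nat.cast : ℕ → ℤ) key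
  push_cast at key2 ⊢
  split_ifs at key2 ⊢ <;> first | omega | tauto

lemma aux_delta_compl (k : V → V → ℕ) (hsym : ∀ u v, k u v = k v u) (C : Finset V) :
    deltaA k Cᶜ = deltaA k C := by
  unfold deltaA
  rw [compl_compl, Finset.sum_comm]
  exact Finset.sum_congr rfl fun u _ => Finset.sum_congr rfl fun v _ => by rw [hsym]

end Stmt17Aux2

/-- For a bridge `e = a–b` separating `V` into `A ∋ a` and `Aᶜ ∋ b`,
and a balanced multidegree `d̂` of total degree `D` on the blow-up `Γ̂_{e}`:
`d̂_A = m_A(D)` and `d̂_{Aᶜ} = m_{Aᶜ}(D)` in `Γ̂`, and the multidegree on `Γ`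
obtained by adding 1 at `a` is balanced of total degree `D` with value
`m_{Aᶜ}(D)` on `Aᶜ`, hence not strictly balanced. -/
theorem stmt17 (V : Type) [Fintype V] [DecidableEq V] (k : V → V → ℕ) (w : V → ℕ)
    (hsym : ∀ u v, k u v = k v u) (hstab : IsStable k w) (hg : 2 ≤ genus k w)
    (a b : V) (hbr : IsBridge k a b)
    (A : Finset V) (ha : a ∈ A) (hb : b ∉ A)
    (hsep : ∀ u ∈ A, ∀ v ∈ Aᶜ, ¬(u = a ∧ v = b) → k u v = 0)
    (D : ℤ) (dh : (V ⊕ Unit) → ℤ)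
    (hbal : IsBalanced (blowK k a b) (blowW w) D dh)
    (hexc : dh (Sum.inr ()) = 1) :
    (degA dh (A.image Sum.inl) : ℚ) = mA (blowK k a b) (blowW w) D (A.image Sum.inl) ∧
    (degA dh (Aᶜ.image Sum.inl) : ℚ) = mA (blowK k a b) (blowW w) D (Aᶜ.image Sum.inl) ∧
    IsBalanced k w D (fun v => if v = a then dh (Sum.inl v) + 1 else dh (Sum.inl v)) ∧
    (degA (fun v => if v = a then dh (Sum.inl v) + 1 else dh (Sum.inl v)) Aᶜ : ℚ) =
      mA k w D Aᶜ ∧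
    ¬ IsStrictlyBalanced k w D
        (fun v => if v = a then dh (Sum.inl v) + 1 else dh (Sum.inl v)) := by
  classical
  obtain ⟨hab, hk1, -⟩ := hbr
  have hk2 : k b a = 1 := (hsym b a).trans hk1
  have hgb := aux_genus_blow k w (a := a) (b := b) hab hk1 hk2
  have hgpos : (2 : ℤ) ≤ 2 * genus k w - 2 := by omega
  have hc0 : ((2 * genus k w - 2 : ℤ) : ℚ) ≠ 0 := by
    have h0 : (0 : ℚ) < ((2 * genus k w - 2 : ℤ) : ℚ) := by
      exact_mod_cast lt_of_lt_of_le (by norm_num : (0:ℤ) < 2) hgpos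
    exact ne_of_gt h0
  have hb' : b ∈ Aᶜ := Finset.mem_compl.mpr hb
  have ha' : a ∉ Aᶜ := by simp [ha]
  -- delta of A in Γ
  have hdA : deltaA k A = 1 := by
    rw [aux_delta_cast k A]
    have h1 : (∑ u ∈ A, ∑ v ∈ Aᶜ, k u v) = 1 := by
      rw [Finset.sum_eq_single_of_mem a ha]
      · rw [Finset.sum_eq_single_of_mem b hb']
        · exact hk1
        · intro v hv hvb
          exact hsep a ha v hv (fun hh => hvb hh.2)
      · intro u hu hua
        exact Finset.sum_eq_zero fun v hv => hsep u hu v hv (fun hh => hua hh.1)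
    rw [h1]
    norm_num
  have hdAc : deltaA k Aᶜ = 1 := by rw [aux_delta_compl k hsym A]; exact hdA
  have hdhatA : deltaA (blowK k a b) (A.image Sum.inl) = 1 := by
    rw [aux_delta_image k hab hk1 hk2 A, hdA]
    simp [ha, hb]
  have hdhatAc : deltaA (blowK k a b) (Aᶜ.image Sum.inl) = 1 := by
    rw [aux_delta_image k hab hk1 hk2 Aᶜ, hdAc]
    simp [ha', hb']
  -- wA facts
  have hwAi := aux_wA_image k w hab hk1 hk2 A
  have hwAci := aux_wA_image k w hab hk1 hk2 Aᶜ
  have hWsum : wA k w A + wA k w Aᶜ = 2 * genus k w - 2 := by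
    rw [← aux_wA_univ k w hsym]
    unfold wA
    exact Finset.sum_add_sum_compl A _
  -- degrees
  have hdeg_img : ∀ C : Finset V, degA dh (C.image Sum.inl) = ∑ v ∈ C, dh (Sum.inl v) := by
    intro C
    unfold degA
    exact aux_sum_image_inl C dh
  have hdeg_ins : ∀ C : Finset V,
      degA dh (insert (Sum.inr ()) (C.image Sum.inl)) = 1 + ∑ v ∈ C, dh (Sum.inl v) := by
    intro C
    unfold degA
    rw [Finset.sum_insert (aux_inr_not_mem C), hexc, aux_sum_image_inl]
  have htot : ∑ v, dh (Sum.inl v) = D - 1 := by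
    have h0 := hbal.1
    unfold degA at h0
    rw [Fintype.sum_sum_type] at h0
    have h1 : ∑ x : Unit, dh (Sum.inr x) = 1 := by simpa using hexc
    omega
  have hsplitAdeg : (∑ v ∈ A, dh (Sum.inl v)) + (∑ v ∈ Aᶜ, dh (Sum.inl v)) = D - 1 := by
    rw [Finset.sum_add_sum_compl]
    exact htot
  -- m values
  have hmImgA : mA (blowK k a b) (blowW w) D (A.image Sum.inl)
      = (D : ℚ) * ((wA k w A : ℤ) : ℚ) / ((2 * genus k w - 2 : ℤ) : ℚ) - 1 / 2 := by
    unfold mA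
    rw [hgb, hwAi, hdhatA]
    norm_num
  have hmImgAc : mA (blowK k a b) (blowW w) D (Aᶜ.image Sum.inl)
      = (D : ℚ) * ((wA k w Aᶜ : ℤ) : ℚ) / ((2 * genus k w - 2 : ℤ) : ℚ) - 1 / 2 := by
    unfold mA
    rw [hgb, hwAci, hdhatAc]
    norm_num
  have hmAc : mA k w D Aᶜ
      = (D : ℚ) * ((wA k w Aᶜ : ℤ) : ℚ) / ((2 * genus k w - 2 : ℤ) : ℚ) - 1 / 2 := by
    unfold mA
    rw [hdAc]
    norm_num
  have hWq : ((wA k w A : ℤ) : ℚ) + ((wA k w Aᶜ : ℤ) : ℚ) = ((2 * genus k w - 2 : ℤ) : ℚ) := by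
    exact_mod_cast congrArg (fun z : ℤ => (z : ℚ)) hWsum
  have hmsum : (D : ℚ) * ((wA k w A : ℤ) : ℚ) / ((2 * genus k w - 2 : ℤ) : ℚ)
      + (D : ℚ) * ((wA k w Aᶜ : ℤ) : ℚ) / ((2 * genus k w - 2 : ℤ) : ℚ) = (D : ℚ) := by
    rw [← add_div, ← mul_add, hWq, mul_div_assoc, div_self hc0, mul_one]
  have hIneqA := hbal.2 (A.image Sum.inl)
  have hIneqAc := hbal.2 (Aᶜ.image Sum.inl)
  rw [hmImgA, hdeg_img A] at hIneqA
  rw [hmImgAc, hdeg_img Aᶜ] at hIneqAc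
  have hxy : ((∑ v ∈ A, dh (Sum.inl v) : ℤ) : ℚ) + ((∑ v ∈ Aᶜ, dh (Sum.inl v) : ℤ) : ℚ)
      = (D : ℚ) - 1 := by
    exact_mod_cast congrArg (fun z : ℤ => (z : ℚ)) hsplitAdeg
  have hEqA : ((∑ v ∈ A, dh (Sum.inl v) : ℤ) : ℚ)
      = (D : ℚ) * ((wA k w A : ℤ) : ℚ) / ((2 * genus k w - 2 : ℤ) : ℚ) - 1 / 2 := by
    linarith
  have hEqAc : ((∑ v ∈ Aᶜ, dh (Sum.inl v) : ℤ) : ℚ)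
      = (D : ℚ) * ((wA k w Aᶜ : ℤ) : ℚ) / ((2 * genus k w - 2 : ℤ) : ℚ) - 1 / 2 := by
    linarith
  -- degrees of the modified multidegree
  have hdXsum : ∀ C : Finset V,
      degA (fun v => if v = a then dh (Sum.inl v) + 1 else dh (Sum.inl v)) C
        = (∑ v ∈ C, dh (Sum.inl v)) + (if a ∈ C then 1 else 0) := by
    intro C
    unfold degA
    have hpt : ∀ v, (if v = a then dh (Sum.inl v) + 1 else dh (Sum.inl v))
        = dh (Sum.inl v) + (if v = a then 1 else 0) := by
      intro v
      by_cases h : v = a <;> simp [h]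
    rw [Finset.sum_congr rfl fun v _ => hpt v, Finset.sum_add_distrib,
      Finset.sum_ite_eq' C a (fun _ => (1 : ℤ))]
  -- the balancedness of dX
  have hBalX : IsBalanced k w D
      (fun v => if v = a then dh (Sum.inl v) + 1 else dh (Sum.inl v)) := by
    constructor
    · rw [hdXsum Finset.univ, if_pos (Finset.mem_univ a), htot]
      ring
    · intro C
      by_cases hC : a ∈ C
      · have hdel : deltaA (blowK k a b) (insert (Sum.inr ()) (C.image Sum.inl))
            = deltaA k C := by
          rw [aux_delta_insert k hab hk1 hk2 C]
          by_cases hBC : b ∈ C <;> simp [hC, hBC]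
        have hm : mA k w D C
            = mA (blowK k a b) (blowW w) D (insert (Sum.inr ()) (C.image Sum.inl)) := by
          unfold mA
          rw [hgb, aux_wA_insert k w hab hk1 hk2 C, hdel]
        have hle := hbal.2 (insert (Sum.inr ()) (C.image Sum.inl))
        rw [hdeg_ins C] at hle
        rw [hm, hdXsum C, if_pos hC]
        have hcast : ((1 + ∑ v ∈ C, dh (Sum.inl v) : ℤ) : ℚ)
            = (((∑ v ∈ C, dh (Sum.inl v)) + 1 : ℤ) : ℚ) := by push_cast; ring
        rw [hcast] at hle
        exact hle
      · have hdel : deltaA (blowK k a b) (C.image Sum.inl) = deltaA k C := by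
          rw [aux_delta_image k hab hk1 hk2 C]
          by_cases hBC : b ∈ C <;> simp [hC, hBC]
        have hm : mA k w D C = mA (blowK k a b) (blowW w) D (C.image Sum.inl) := by
          unfold mA
          rw [hgb, aux_wA_image k w hab hk1 hk2 C, hdel]
        have hle := hbal.2 (C.image Sum.inl)
        rw [hdeg_img C] at hle
        rw [hm, hdXsum C, if_neg hC, add_zero]
        exact hle
  -- value on Aᶜ
  have hValAc : (degA (fun v => if v = a then dh (Sum.inl v) + 1 else dh (Sum.inl v)) Aᶜ : ℚ)
      = mA k w D Aᶜ := by
    rw [hdXsum Aᶜ, if_neg ha', add_zero, hmAc]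
    exact hEqAc
  refine ⟨?_, ?_, hBalX, hValAc, ?_⟩
  · rw [hdeg_img A, hmImgA]
    exact hEqA
  · rw [hdeg_img Aᶜ, hmImgAc]
    exact hEqAc
  · rintro ⟨-, hstrict⟩
    have hne1 : Aᶜ ≠ ∅ := Finset.ne_empty_of_mem hb'
    have hne2 : Aᶜ ≠ Finset.univ := fun h => ha' (h.symm ▸ Finset.mem_univ a)
    have := hstrict Aᶜ hne1 hne2
    rw [← hValAc] at this
    exact lt_irrefl _ this
end
end

section
/- Let (Γ,w) be a stable weighted graph of genus g ≥ 2 which is d-general, and let S be a nonempty set of bridges of Γ. Then the blow-up Γ̂_S admits no strictly balanced multidegree of total degree d, i.e. B_d(Γ̂_S) = ∅. -/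
open Finset

noncomputable section
open scoped Classical

variable {V : Type} [Fintype V] [DecidableEq V]

/-!
Collapsing every exceptional vertex `v_e` of the blow-up onto a chosen endpoint `σ e` of `e` gives
a map `V̂ → V`. The preimage of any `B ⊆ V` has the same `w` and `δ` as `B` (exceptional vertices
have `w = 0`, and each one only re-routes the bridge it subdivides), so its `m` is `m_B`. Pushing a
balanced `d̂` forward along `σ = first endpoint` therefore gives a balanced multidegree `d` of `Γ`,
which is strictly balanced by `d`-generality. For a bridge `a–b` in `S` and the side `A ∋ a` it
cuts off, the preimage of `A` under `σ = second endpoint` misses `v_{ab}`, whence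
`m_A ≤ d_A - 1`. Adding `m_{Aᶜ} < d_{Aᶜ}` and `m_A + m_{Aᶜ} = d - δ_A = d - 1` gives
`d - 1 < d - 1`.
-/

section Pullback

variable {W X : Type} [Fintype W] [DecidableEq X] (π : W → X)

def liftSet (B : Finset X) : Finset W := univ.filter fun x => π x ∈ B

def pushDeg (d : W → ℤ) : X → ℤ := fun v => ∑ x ∈ univ.filter (π · = v), d x

def pushK (k : W → W → ℕ) : X → X → ℕ := fun u v =>
  ∑ x ∈ univ.filter (π · = u), ∑ y ∈ univ.filter (π · = v), k x y

@[simp]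
lemma mem_liftSet {π : W → X} {B : Finset X} {x : W} : x ∈ liftSet π B ↔ π x ∈ B := by
  simp [liftSet]

lemma sum_liftSet {M : Type} [AddCommMonoid M] (B : Finset X) (f : W → M) :
    ∑ x ∈ liftSet π B, f x = ∑ v ∈ B, ∑ x ∈ univ.filter (π · = v), f x :=
  (sum_fiberwise_eq_sum_filter univ B π f).symm

lemma compl_liftSet [DecidableEq W] [Fintype X] (B : Finset X) :
    (liftSet π B)ᶜ = liftSet π Bᶜ := by
  ext x; simp [liftSet]

lemma liftSet_univ [Fintype X] : liftSet π univ = univ := by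
  ext x; simp [liftSet]

lemma degA_pushDeg (d : W → ℤ) (B : Finset X) :
    degA (pushDeg π d) B = degA d (liftSet π B) :=
  (sum_liftSet π B d).symm

lemma deltaA_liftSet [DecidableEq W] [Fintype X] (k : W → W → ℕ) (B : Finset X) :
    deltaA k (liftSet π B) = deltaA (pushK π k) B := by
  simp only [deltaA, pushK, compl_liftSet, sum_liftSet, Nat.cast_sum]
  exact sum_congr rfl fun _ _ => sum_comm

end Pullback

lemma deltaA_congr {k k' : V → V → ℕ} (h : ∀ u v, u ≠ v → k u v = k' u v) (A : Finset V) :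
    deltaA k A = deltaA k' A :=
  sum_congr rfl fun u hu => sum_congr rfl fun v hv => by
    rw [h u v (by rintro rfl; exact mem_compl.1 hv hu)]

section Symmetric

variable {k : V → V → ℕ}

lemma two_dvd_sum_offDiag (hsym : ∀ u v, k u v = k v u) :
    2 ∣ ∑ u, ∑ v ∈ univ.erase u, k u v := by
  rw [← ZMod.natCast_eq_zero_iff, Nat.cast_sum]
  have hoff : ∑ u, ((∑ v ∈ univ.erase u, k u v : ℕ) : ZMod 2)
      = ∑ p ∈ (univ ×ˢ univ).filter (fun p : V × V => p.1 ≠ p.2), (k p.1 p.2 : ZMod 2) := by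
    rw [sum_filter, sum_product]
    refine sum_congr rfl fun u _ => ?_
    rw [Nat.cast_sum, ← filter_ne, sum_filter]
  rw [hoff]
  refine sum_involution (fun p _ => p.swap) (fun p _ => ?_) (fun p hp _ h => ?_)
    (fun p hp => by simpa [eq_comm] using hp) (fun _ _ => rfl)
  · rw [Prod.fst_swap, Prod.snd_swap, hsym p.2, ← two_mul, (by decide : (2 : ZMod 2) = 0),
      zero_mul]
  · exact (mem_filter.1 hp).2 (congrArg Prod.snd h)

lemma wA_univ (hsym : ∀ u v, k u v = k v u) (w : V → ℕ) :
    wA k w univ = 2 * genus k w - 2 := by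
  obtain ⟨c, hc⟩ := two_dvd_sum_offDiag hsym
  have hval : ∑ v, ∑ u ∈ univ.erase v, (k u v : ℤ) = 2 * c := by
    simp_rw [hsym _ (_ : V)]
    exact_mod_cast hc
  simp only [wA, genus, numEdges, hc, Nat.mul_div_cancel_left c two_pos, sum_add_distrib,
    sum_sub_distrib, ← mul_sum, hval, sum_const, card_univ, nsmul_eq_mul]
  push_cast
  ring

lemma deltaA_compl (hsym : ∀ u v, k u v = k v u) (A : Finset V) :
    deltaA k Aᶜ = deltaA k A := by
  rw [deltaA, deltaA, compl_compl, sum_comm]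
  simp_rw [hsym]

lemma wA_eq_sum_deltaA_singleton (hsym : ∀ u v, k u v = k v u) (w : V → ℕ) (A : Finset V) :
    wA k w A = ∑ v ∈ A, (2 * (w v : ℤ) - 2 + 2 * (k v v : ℤ) + deltaA k {v}) := by
  refine sum_congr rfl fun v _ => ?_
  rw [deltaA, sum_singleton, ← compl_singleton]
  simp_rw [hsym v]

lemma mA_add_mA_compl (hsym : ∀ u v, k u v = k v u) (w : V → ℕ) (hg : genus k w ≠ 1)
    (D : ℤ) (A : Finset V) :
    mA k w D A + mA k w D Aᶜ = D - deltaA k A := by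
  have hw : ((wA k w A : ℤ) : ℚ) + (wA k w Aᶜ : ℚ) = ((2 * genus k w - 2 : ℤ) : ℚ) := by
    rw [← wA_univ hsym w, wA, wA, wA, ← sum_add_sum_compl A, Int.cast_add]
  have hg' : ((2 * genus k w - 2 : ℤ) : ℚ) ≠ 0 := by
    exact_mod_cast (show 2 * genus k w - 2 ≠ 0 by omega)
  rw [mA, mA, deltaA_compl hsym]
  field_simp
  linear_combination 2 * (D : ℚ) * hw

end Symmetric

lemma SimpleGraph.Reachable.of_forall_adj {W : Type} {G G' : SimpleGraph W}
    (h : ∀ u v, G.Adj u v → G'.Reachable u v) {u v : W} (huv : G.Reachable u v) :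
    G'.Reachable u v := by
  rw [SimpleGraph.reachable_iff_reflTransGen] at huv ⊢
  exact Relation.ReflTransGen.lift' id
    (fun x y hxy => (SimpleGraph.reachable_iff_reflTransGen x y).1 (h x y hxy)) _ _ huv

lemma exists_cut_of_isBridge {k : V → V → ℕ} (hconn : (graphOf k).Connected) {a b : V}
    (hbr : IsBridge k a b) :
    ∃ A : Finset V, a ∈ A ∧ b ∉ A ∧ ∀ u ∈ A, ∀ v ∉ A, k u v ≠ 0 → u = a ∧ v = b := by
  set G' := graphOf (removeEdge k a b)
  have hadj : ∀ u v, (graphOf k).Adj u v → ¬((u = a ∧ v = b) ∨ (u = b ∧ v = a)) → G'.Adj u v :=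
    fun u v ⟨huv, hk⟩ hab => ⟨huv, by
      simp only [removeEdge, if_neg hab, if_neg (by tauto : ¬((v = a ∧ u = b) ∨ (v = b ∧ u = a)))]
      exact hk⟩
  have hb : ¬G'.Reachable a b := by
    intro hreach
    refine hbr.2.2 ((SimpleGraph.connected_iff _).2
      ⟨fun u v => (hconn.preconnected u v).of_forall_adj fun x y hxy => ?_, ⟨a⟩⟩)
    by_cases hab : (x = a ∧ y = b) ∨ (x = b ∧ y = a)
    · rcases hab with ⟨rfl, rfl⟩ | ⟨rfl, rfl⟩
      exacts [hreach, hreach.symm]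
    · exact (hadj x y hxy hab).reachable
  refine ⟨univ.filter (G'.Reachable a), by simp, by simpa using hb, fun u hu v hv hk => ?_⟩
  simp only [mem_filter, mem_univ, true_and] at hu hv
  by_cases hab : (u = a ∧ v = b) ∨ (u = b ∧ v = a)
  · rcases hab with hab | ⟨rfl, -⟩
    exacts [hab, absurd hu hb]
  · have huv : u ≠ v := by rintro rfl; exact hv hu
    exact absurd (hu.trans (hadj u v ⟨huv, Or.inl (Nat.pos_of_ne_zero hk)⟩ hab).reachable) hv

def IsSimpleEdgeSet (k : V → V → ℕ) (S : Finset (V × V)) : Prop :=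
  ∀ p ∈ S, p.1 ≠ p.2 ∧ k p.1 p.2 = 1 ∧ (p.2, p.1) ∉ S

def blowDown {S : Finset (V × V)} (σ : S → V) : V ⊕ S → V := Sum.elim id σ

section BlowUp

variable {k : V → V → ℕ} {S : Finset (V × V)}

omit [Fintype V] in
lemma blowKS_symm (hsym : ∀ u v, k u v = k v u) (x y : V ⊕ S) :
    blowKS k S x y = blowKS k S y x := by
  cases x <;> cases y <;> simp only [blowKS, hsym, or_comm]

omit [Fintype V] in
lemma blowKS_inl_self (hS : IsSimpleEdgeSet k S) (v : V) :
    blowKS k S (.inl v) (.inl v) = k v v :=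
  if_neg fun h => by rcases h with h | h <;> exact (hS _ h).1 rfl

lemma sum_filter_blowDown {M : Type} [AddCommMonoid M] (σ : S → V) (f : V ⊕ S → M) (v : V) :
    ∑ x ∈ univ.filter (blowDown σ · = v), f x
      = f (.inl v) + ∑ e ∈ univ.filter (σ · = v), f (.inr e) := by
  rw [sum_filter, Fintype.sum_sum_type, sum_filter]
  exact congrArg (· + _) (Fintype.sum_ite_eq' v fun u => f (.inl u))

omit [Fintype V] in
lemma sum_blowKS_incidence (hS : IsSimpleEdgeSet k S) (σ : S → V)
    (hσ : ∀ e, σ e = e.1.1 ∨ σ e = e.1.2) {u v : V} (huv : u ≠ v) :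
    ∑ e ∈ univ.filter (σ · = u), blowKS k S (.inr e) (.inl v)
      + ∑ e ∈ univ.filter (σ · = v), blowKS k S (.inl u) (.inr e)
      = if (u, v) ∈ S ∨ (v, u) ∈ S then 1 else 0 := by
  have hedge : ∀ e : S, (if σ e = u then blowKS k S (.inr e) (.inl v) else 0)
      + (if σ e = v then blowKS k S (.inl u) (.inr e) else 0)
      = (if e.1 = (u, v) then 1 else 0) + (if e.1 = (v, u) then 1 else 0) := by
    rintro ⟨⟨a, b⟩, hab⟩
    have hne := (hS _ hab).1
    rcases hσ ⟨(a, b), hab⟩ with h | h <;> simp only at h <;>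
      simp only [blowKS, h, Prod.ext_iff] <;> split_ifs <;> grind
  rw [sum_filter, sum_filter, ← sum_add_distrib, sum_congr rfl fun e _ => hedge e,
    sum_add_distrib, sum_coe_sort S (fun p => if p = (u, v) then 1 else 0),
    sum_coe_sort S (fun p => if p = (v, u) then 1 else 0), sum_ite_eq', sum_ite_eq']
  by_cases h : (u, v) ∈ S
  · simp [h, (hS _ h).2.2]
  · simp [h]

lemma pushK_blowDown (hsym : ∀ u v, k u v = k v u) (hS : IsSimpleEdgeSet k S) (σ : S → V)
    (hσ : ∀ e, σ e = e.1.1 ∨ σ e = e.1.2) {u v : V} (huv : u ≠ v) :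
    pushK (blowDown σ) (blowKS k S) u v = k u v := by
  have hzero : ∀ e : S, ∑ e' ∈ univ.filter (σ · = v), blowKS k S (.inr e) (.inr e') = 0 :=
    fun _ => sum_eq_zero fun _ _ => rfl
  simp only [pushK, sum_filter_blowDown, sum_add_distrib, hzero, sum_const_zero, add_zero]
  rw [add_assoc, sum_blowKS_incidence hS σ hσ huv]
  by_cases h : (u, v) ∈ S ∨ (v, u) ∈ S
  · have hk : k u v = 1 := by
      rcases h with h | h
      exacts [(hS _ h).2.1, hsym u v ▸ (hS _ h).2.1]
    simp [blowKS, h, hk]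
  · simp [blowKS, h]

lemma deltaA_blowKS_liftSet (hsym : ∀ u v, k u v = k v u) (hS : IsSimpleEdgeSet k S)
    (σ : S → V) (hσ : ∀ e, σ e = e.1.1 ∨ σ e = e.1.2) (B : Finset V) :
    deltaA (blowKS k S) (liftSet (blowDown σ) B) = deltaA k B := by
  rw [deltaA_liftSet]
  exact deltaA_congr (fun u v huv => pushK_blowDown hsym hS σ hσ huv) B

lemma deltaA_blowKS_inl (hsym : ∀ u v, k u v = k v u) (hS : IsSimpleEdgeSet k S) (v : V) :
    deltaA (blowKS k S) {.inl v} = deltaA k {v} := by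
  -- send each exceptional vertex to an endpoint other than `v`, so that only `inl v` lies over `v`
  set σ : S → V := fun e => if e.1.1 = v then e.1.2 else e.1.1
  have hσ : ∀ e, σ e = e.1.1 ∨ σ e = e.1.2 := fun e => by
    by_cases h : e.1.1 = v <;> simp [σ, h]
  have hlift : liftSet (blowDown σ) {v} = {.inl v} := by
    ext (x | e)
    · simp [blowDown]
    · have hne := (hS e e.2).1
      simp only [mem_liftSet, blowDown, Sum.elim_inr, mem_singleton, reduceCtorEq, iff_false, σ]
      split_ifs with h
      exacts [fun h' => hne (h.trans h'.symm), h]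
  rw [← hlift, deltaA_blowKS_liftSet hsym hS σ hσ]

lemma deltaA_blowKS_inr (hS : IsSimpleEdgeSet k S) (e : S) :
    deltaA (blowKS k S) {.inr e} = 2 := by
  rw [deltaA, sum_singleton, compl_singleton, sum_erase univ (by rfl),
    Fintype.sum_sum_type]
  simp [blowKS, filter_or, filter_eq', card_pair (hS e e.2).1]

lemma wA_blowKS_liftSet (hsym : ∀ u v, k u v = k v u) (hS : IsSimpleEdgeSet k S) (w : V → ℕ)
    (σ : S → V) (B : Finset V) :
    wA (blowKS k S) (blowWS w S) (liftSet (blowDown σ) B) = wA k w B := by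
  rw [wA_eq_sum_deltaA_singleton (blowKS_symm hsym), wA_eq_sum_deltaA_singleton hsym,
    sum_liftSet]
  refine sum_congr rfl fun v _ => ?_
  simp only [sum_filter_blowDown, blowKS_inl_self hS, deltaA_blowKS_inl hsym hS,
    deltaA_blowKS_inr hS]
  simp [blowWS, blowKS]

lemma genus_blowKS (hsym : ∀ u v, k u v = k v u) (hS : IsSimpleEdgeSet k S) (w : V → ℕ) :
    genus (blowKS k S) (blowWS w S) = genus k w := by
  have h := wA_blowKS_liftSet hsym hS w (fun e => e.1.1) univ
  rw [liftSet_univ, wA_univ (blowKS_symm hsym), wA_univ hsym] at h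
  omega

lemma mA_blowKS_liftSet (hsym : ∀ u v, k u v = k v u) (hS : IsSimpleEdgeSet k S) (w : V → ℕ)
    (D : ℤ) (σ : S → V) (hσ : ∀ e, σ e = e.1.1 ∨ σ e = e.1.2) (B : Finset V) :
    mA (blowKS k S) (blowWS w S) D (liftSet (blowDown σ) B) = mA k w D B := by
  rw [mA, mA, genus_blowKS hsym hS, wA_blowKS_liftSet hsym hS, deltaA_blowKS_liftSet hsym hS σ hσ]

lemma isBalanced_pushDeg (hsym : ∀ u v, k u v = k v u) (hS : IsSimpleEdgeSet k S) {w : V → ℕ}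
    {D : ℤ} {dh : V ⊕ S → ℤ} (hbal : IsBalanced (blowKS k S) (blowWS w S) D dh)
    (σ : S → V) (hσ : ∀ e, σ e = e.1.1 ∨ σ e = e.1.2) :
    IsBalanced k w D (pushDeg (blowDown σ) dh) := by
  refine ⟨by rw [degA_pushDeg, liftSet_univ, hbal.1], fun B => ?_⟩
  rw [degA_pushDeg, ← mA_blowKS_liftSet hsym hS w D σ hσ]
  exact hbal.2 _

end BlowUp

lemma deltaA_eq_of_cut {k : V → V → ℕ} {A : Finset V} {a b : V} (ha : a ∈ A) (hb : b ∉ A)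
    (hcut : ∀ u ∈ A, ∀ v ∉ A, k u v ≠ 0 → u = a ∧ v = b) :
    deltaA k A = k a b := by
  have hzero : ∀ u ∈ A, ∀ v ∈ Aᶜ, ¬(u = a ∧ v = b) → (k u v : ℤ) = 0 := fun u hu v hv huv => by
    by_contra h
    exact huv (hcut u hu v (mem_compl.1 hv) (by exact_mod_cast h))
  rw [deltaA, sum_eq_single_of_mem a ha fun u hu hua =>
      sum_eq_zero fun v hv => hzero u hu v hv fun h => hua h.1,
    sum_eq_single_of_mem b (mem_compl.2 hb) fun v hv hvb => hzero a ha v hv fun h => hvb h.2]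

lemma liftSet_fst_eq_insert {k : V → V → ℕ} {S : Finset (V × V)} (hsym : ∀ u v, k u v = k v u)
    (hS : IsSimpleEdgeSet k S) {A : Finset V} {a b : V} (hab : (a, b) ∈ S) (ha : a ∈ A)
    (hcut : ∀ u ∈ A, ∀ v ∉ A, k u v ≠ 0 → u = a ∧ v = b) :
    liftSet (blowDown fun e : S => e.1.1) A
      = insert (.inr ⟨(a, b), hab⟩) (liftSet (blowDown fun e : S => e.1.2) A) := by
  ext (v | ⟨⟨p, q⟩, hpq⟩)
  · simp [blowDown]
  · have hk : k p q ≠ 0 := by rw [(hS _ hpq).2.1]; exact one_ne_zero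
    simp only [mem_liftSet, blowDown, mem_insert, Sum.elim_inr, Sum.inr.injEq, Subtype.mk.injEq,
      Prod.mk.injEq]
    constructor
    · intro hp
      by_cases hq : q ∈ A
      exacts [Or.inr hq, Or.inl (hcut p hp q hq hk)]
    · rintro (⟨rfl, rfl⟩ | hq)
      · exact ha
      · by_contra hp
        obtain ⟨rfl, rfl⟩ := hcut q hq p hp (hsym p q ▸ hk)
        exact (hS _ hab).2.2 hpq

/-- If `(Γ,w)` is `d`-general and `S` is a nonempty set of
bridges, then the blow-up `Γ̂_S` admits no strictly balanced multidegree of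
total degree `d`: `B_d(Γ̂_S) = ∅`. -/
theorem stmt18 (V : Type) [Fintype V] [DecidableEq V] (k : V → V → ℕ) (w : V → ℕ)
    (hsym : ∀ u v, k u v = k v u) (hstab : IsStable k w) (hg : 2 ≤ genus k w)
    (D : ℤ) (hgen : IsDGeneral k w D)
    (S : Finset (V × V)) (hS : S.Nonempty)
    (hbridges : ∀ p ∈ S, IsBridge k p.1 p.2)
    (hor : ∀ p ∈ S, (p.2, p.1) ∉ S) :
    ¬ ∃ dh : (V ⊕ {p : V × V // p ∈ S}) → ℤ, IsStrictlyBalancedBlowS k w S D dh := by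
  rintro ⟨dh, hbal, hexc, -⟩
  have hSk : IsSimpleEdgeSet k S := fun p hp => ⟨(hbridges p hp).1, (hbridges p hp).2.1, hor p hp⟩
  obtain ⟨⟨a, b⟩, hab⟩ := hS
  obtain ⟨A, ha, hb, hcut⟩ := exists_cut_of_isBridge hstab.1 (hbridges _ hab)
  set d := pushDeg (blowDown fun e : S => e.1.1) dh
  have hd : IsBalanced k w D d := isBalanced_pushDeg hsym hSk hbal _ fun _ => Or.inl rfl
  have hAc : mA k w D Aᶜ < degA d Aᶜ := (hgen d hd).2 Aᶜ (ne_empty_of_mem (mem_compl.2 hb))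
    (by rw [Ne, compl_eq_univ_iff]; exact ne_empty_of_mem ha)
  have hA : mA k w D A ≤ degA d A - 1 := by
    have h := hbal.2 (liftSet (blowDown fun e : S => e.1.2) A)
    rw [mA_blowKS_liftSet hsym hSk w D _ fun _ => Or.inr rfl] at h
    rw [degA_pushDeg, liftSet_fst_eq_insert hsym hSk hab ha hcut, degA,
      sum_insert (by simpa [blowDown] using hb), hexc, ← degA]
    push_cast
    linarith
  have hsum := mA_add_mA_compl hsym w (by omega) D A
  rw [deltaA_eq_of_cut ha hb hcut, (hSk _ hab).2.1] at hsum
  have hdeg : ((degA d A + degA d Aᶜ : ℤ) : ℚ) = D := by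
    rw [← hd.1]
    exact_mod_cast sum_add_sum_compl A d
  push_cast at hsum hdeg
  linarith
end
end
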